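/- arXiv:2305.12085 — 5 statements merged into one kernel-verified Lean document; each statement's English description precedes it below -/
import Mathlib

section
/- For every a, b ∈ ℝ and 1 < p ≤ 2, there exists c with min{a,b} ≤ c ≤ max{a,b} such that |a|^p + |b|^p − 2|(a+b)/2|^p = (1/4)(b−a)^2 p(p−1)|c|^{p−2}. -/
/-!
With `m` the midpoint and `t` the half-length of `[a, b]`, Cauchy's mean value theorem for
`x ↦ f (m + x) + f (m - x)` and `x ↦ x ^ 2` on `[0, t]` turns the second difference into
`t ^ 2` times a slope of `f'` over some `[m - ξ, m + ξ]`. For `f = |·| ^ p` the derivative `f'`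
is differentiable off `0` with even derivative `p (p - 1) |x| ^ (p - 2)`. A slope of `f'` over an
interval containing `0` is a weighted mean of the slopes on either side of `0`; by evenness both
are values of `f''` on the positive axis, and Darboux's theorem there yields the point `c`.
-/

open Set

theorem slope_mem_uIcc_slope_slope (f : ℝ → ℝ) {a b c : ℝ} (hab : a < b) (hbc : b < c) :
    slope f a c ∈ uIcc (slope f a b) (slope f b c) := by
  rw [← segment_eq_uIcc, ← lineMap_slope_slope_sub_div_sub f a b c (hab.trans hbc).ne]
  exact lineMap_mem_segment ℝ _ _
    ⟨div_nonneg (by linarith) (by linarith), div_le_one_of_le₀ (by linarith) (by linarith)⟩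

theorem exists_hasDerivAt_eq_slope_of_even {f f' : ℝ → ℝ} (hf : Continuous f)
    (hff' : ∀ x ≠ 0, HasDerivAt f (f' x) x) (heven : Function.Even f') {a b : ℝ}
    (hab : a < b) :
    ∃ c ∈ Icc a b, f' c = slope f a b := by
  by_cases h0 : 0 ∈ Ioo a b
  · obtain ⟨c₁, hc₁, h₁⟩ := exists_hasDerivAt_eq_slope f f' h0.1 hf.continuousOn
      fun x hx ↦ hff' x hx.2.ne
    obtain ⟨c₂, hc₂, h₂⟩ := exists_hasDerivAt_eq_slope f f' h0.2 hf.continuousOn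
      fun x hx ↦ hff' x hx.1.ne'
    have hpos : ∀ x ∈ uIcc (-c₁) c₂, 0 < x := fun x hx ↦
      lt_of_lt_of_le (lt_min (neg_pos.2 hc₁.2) hc₂.1) hx.1
    have hslope : slope f a b ∈ f' '' uIcc (-c₁) c₂ := by
      refine (ordConnected_uIcc.image_hasDerivWithinAt fun x hx ↦
        (hff' x (hpos x hx).ne').hasDerivWithinAt).uIcc_subset
        (mem_image_of_mem _ left_mem_uIcc) (mem_image_of_mem _ right_mem_uIcc) ?_
      rw [heven c₁, h₁, h₂, ← slope_def_field, ← slope_def_field]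
      exact slope_mem_uIcc_slope_slope f h0.1 h0.2
    obtain ⟨c, hc, hfc⟩ := hslope
    have hc_le : c ≤ max (-c₁) c₂ := hc.2
    rcases le_or_gt c b with hcb | hbc
    · exact ⟨c, ⟨by linarith [hpos c hc, h0.1], hcb⟩, hfc⟩
    · refine ⟨-c, ⟨?_, by linarith [hpos c hc, h0.2]⟩, by rw [heven, hfc]⟩
      have hc_neg : c ≤ -c₁ := by
        rcases le_max_iff.1 hc_le with h | h
        · exact h
        · linarith [hc₂.2]
      linarith [hc₁.1]
  · obtain ⟨c, hc, h⟩ := exists_hasDerivAt_eq_slope f f' hab hf.continuousOn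
      fun x hx ↦ hff' x fun hx0 ↦ h0 (hx0 ▸ hx)
    exact ⟨c, Ioo_subset_Icc_self hc, by rw [h, slope_def_field]⟩

theorem exists_add_sub_two_mul_midpoint_eq {f f' f'' : ℝ → ℝ}
    (hf : ∀ x, HasDerivAt f (f' x) x) (hf' : Continuous f')
    (hf'' : ∀ x ≠ 0, HasDerivAt f' (f'' x) x) (heven : Function.Even f'') {a b : ℝ}
    (hab : a ≤ b) :
    ∃ c ∈ Icc a b, f a + f b - 2 * f ((a + b) / 2) = (b - a) ^ 2 / 4 * f'' c := by
  rcases hab.eq_or_lt with rfl | hab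
  · exact ⟨a, left_mem_Icc.2 le_rfl, by rw [add_self_div_two]; ring⟩
  set m := (a + b) / 2
  set t := (b - a) / 2
  have ht : 0 < t := by simp only [t]; linarith
  have hb : m + t = b := by simp only [m, t]; ring
  have ha : m - t = a := by simp only [m, t]; ring
  have hg : ∀ x, HasDerivAt (fun x ↦ f (m + x) + f (m - x)) (f' (m + x) - f' (m - x)) x := by
    intro x
    have h₁ : HasDerivAt (fun y ↦ f (m + y)) (f' (m + x) * 1) x :=
      (hf (m + x)).comp x ((hasDerivAt_id x).const_add m)
    have h₂ : HasDerivAt (fun y ↦ f (m - y)) (f' (m - x) * -1) x :=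
      (hf (m - x)).comp x ((hasDerivAt_id x).const_sub m)
    exact (h₁.add h₂).congr_deriv (by ring)
  obtain ⟨ξ, hξ, hcauchy⟩ := exists_ratio_hasDerivAt_eq_ratio_slope _ _ ht
    (continuous_iff_continuousAt.2 fun x ↦ (hg x).continuousAt).continuousOn (fun x _ ↦ hg x)
    (fun x ↦ x ^ 2) (fun x ↦ 2 * x) (continuous_pow 2).continuousOn
    fun x _ ↦ by simpa using hasDerivAt_pow 2 x
  obtain ⟨c, hc, hc'⟩ := exists_hasDerivAt_eq_slope_of_even hf' hf'' heven
    (show m - ξ < m + ξ by linarith [hξ.1])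
  refine ⟨c, ⟨by linarith [hc.1, hξ.2], by linarith [hc.2, hξ.2]⟩, ?_⟩
  rw [hc', slope_def_field, show m + ξ - (m - ξ) = 2 * ξ by ring]
  simp only [add_zero, sub_zero, hb, ha] at hcauchy
  have htab : (b - a) ^ 2 = 4 * t ^ 2 := by simp only [t]; ring
  field_simp [hξ.1.ne']
  linear_combination (-4) * hcauchy + (f' (m + ξ) - f' (m - ξ)) * htab

section AbsRpow

variable {p : ℝ}

theorem continuous_mul_abs_rpow_sub_two_mul (hp : 1 < p) :
    Continuous fun x : ℝ ↦ p * |x| ^ (p - 2) * x := by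
  have h := (contDiff_norm_rpow (E := ℝ) hp).continuous_deriv le_rfl
  convert h using 1
  ext x
  simpa using ((hasDerivAt_abs_rpow x hp).deriv).symm

theorem hasDerivAt_mul_abs_rpow_sub_two_mul {x : ℝ} (hx : x ≠ 0) :
    HasDerivAt (fun y ↦ p * |y| ^ (p - 2) * y) (p * (p - 1) * |x| ^ (p - 2)) x := by
  have h := (((hasDerivAt_abs hx).rpow_const (p := p - 2) (.inl (abs_ne_zero.2 hx))).const_mul
    p).mul (hasDerivAt_id x)
  refine h.congr_deriv ?_
  have hx' : 0 < |x| := abs_pos.2 hx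
  have hs : (SignType.sign x : ℝ) * x = |x| := sign_mul_self x
  rw [id, Real.rpow_sub_one hx'.ne']
  field_simp
  linear_combination p * (p - 2) * hs

end AbsRpow

theorem stmt_3_general (p : ℝ) (hp1 : 1 < p) (a b : ℝ) :
    ∃ c : ℝ, min a b ≤ c ∧ c ≤ max a b ∧
      |a| ^ p + |b| ^ p - 2 * |(a + b) / 2| ^ p
        = (1 / 4) * (b - a) ^ 2 * (p * (p - 1)) * |c| ^ (p - 2) := by
  have key {a b : ℝ} (hab : a ≤ b) :=
    exists_add_sub_two_mul_midpoint_eq (f'' := fun x ↦ p * (p - 1) * |x| ^ (p - 2))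
      (fun x ↦ hasDerivAt_abs_rpow x hp1) (continuous_mul_abs_rpow_sub_two_mul hp1)
      (fun _ hx ↦ hasDerivAt_mul_abs_rpow_sub_two_mul hx) (fun x ↦ by simp only [abs_neg]) hab
  rcases le_total a b with hab | hba
  · obtain ⟨c, hc, h⟩ := key hab
    exact ⟨c, (min_le_left a b).trans hc.1, hc.2.trans (le_max_right a b), by rw [h]; ring⟩
  · obtain ⟨c, hc, h⟩ := key hba
    refine ⟨c, (min_le_right a b).trans hc.1, hc.2.trans (le_max_left a b), ?_⟩
    rw [add_comm a b]
    linear_combination h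

/-- For every `a b ∈ ℝ` and `1 < p ≤ 2`, there exists `c` with `min a b ≤ c ≤ max a b`
such that `|a|^p + |b|^p − 2|(a+b)/2|^p = (1/4)(b−a)^2 p(p−1)|c|^(p−2)`. -/
theorem stmt_3 (p : ℝ) (hp1 : 1 < p) (hp2 : p ≤ 2) (a b : ℝ) :
    ∃ c : ℝ, min a b ≤ c ∧ c ≤ max a b ∧
      |a| ^ p + |b| ^ p - 2 * |(a + b) / 2| ^ p
        = (1 / 4) * (b - a) ^ 2 * (p * (p - 1)) * |c| ^ (p - 2) :=
  stmt_3_general p hp1 a b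
end

section
/- For every a, b ∈ ℝ with |a| ≤ M, |b| ≤ M (M > 0) and 1 < p ≤ 2, one has |a|^p + |b|^p − 2|(a+b)/2|^p ≥ (1/4) p(p−1) M^{p−2} (b−a)^2. -/
/-!
The derivative `p |x|^(p-2) x` of `|x|^p` is odd, and on `[0, M]` it grows at least at rate
`K = p (p-1) M^(p-2)`, since `t ↦ t^(p-1)` is concave with derivative
`(p-1) t^(p-2) ≥ (p-1) M^(p-2)`.
So `|x|^p - K x² / 2` has monotone derivative on `[-M, M]`, i.e. `|x|^p` is `K`-strongly convex
there, and the inequality is strong convexity at the midpoint of `a` and `b`.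
-/

open Real Set

lemma mul_rpow_sub_one_mul_le_rpow_sub_rpow {q M x y : ℝ} (hq₀ : 0 ≤ q) (hq₁ : q ≤ 1)
    (hx : 0 ≤ x) (hxy : x ≤ y) (hyM : y ≤ M) :
    q * M ^ (q - 1) * (y - x) ≤ y ^ q - x ^ q := by
  rcases hxy.eq_or_lt with rfl | hxy
  · simp
  have hy : 0 < y := hx.trans_lt hxy
  have hslope : q * y ^ (q - 1) ≤ slope (fun t : ℝ ↦ t ^ q) x y :=
    (concaveOn_rpow hq₀ hq₁).le_slope_of_hasDerivAt hx hy.le hxy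
      (hasDerivAt_rpow_const (.inl hy.ne'))
  rw [slope_def_field, le_div_iff₀ (sub_pos.2 hxy)] at hslope
  have hMy : M ^ (q - 1) ≤ y ^ (q - 1) := rpow_le_rpow_of_nonpos hy hyM (by linarith)
  calc q * M ^ (q - 1) * (y - x) ≤ q * y ^ (q - 1) * (y - x) := by gcongr
    _ ≤ y ^ q - x ^ q := hslope

lemma monotoneOn_Icc_neg_of_odd {f : ℝ → ℝ} {M : ℝ} (hodd : ∀ x, f (-x) = -f x)
    (hf : MonotoneOn f (Icc 0 M)) : MonotoneOn f (Icc (-M) M) := by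
  have hf0 : f 0 = 0 := self_eq_neg.1 (by simpa using hodd 0)
  intro x ⟨hxl, hxu⟩ y ⟨hyl, hyu⟩ hxy
  rcases le_total 0 x with hx | hx
  · exact hf ⟨hx, hxu⟩ ⟨hx.trans hxy, hyu⟩ hxy
  rcases le_total 0 y with hy | hy
  · have h₁ := hf ⟨le_rfl, hy.trans hyu⟩ ⟨hy, hyu⟩ hy
    have h₂ := hf ⟨le_rfl, by linarith⟩ ⟨neg_nonneg.2 hx, by linarith⟩ (neg_nonneg.2 hx)
    linarith [hodd x]
  · have h := hf ⟨neg_nonneg.2 hy, by linarith⟩ ⟨neg_nonneg.2 hx, by linarith⟩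
      (neg_le_neg hxy)
    linarith [hodd x, hodd y]

lemma monotoneOn_deriv_abs_rpow_sub_mul {p M : ℝ} (hp₁ : 1 < p) (hp₂ : p ≤ 2) :
    MonotoneOn (fun x : ℝ ↦ p * |x| ^ (p - 2) * x - p * (p - 1) * M ^ (p - 2) * x)
      (Icc (-M) M) := by
  refine monotoneOn_Icc_neg_of_odd (fun x ↦ by simp only [abs_neg]; ring) ?_
  intro x ⟨hx, _⟩ y ⟨hy, hyM⟩ hxy
  have hpow : ∀ t : ℝ, 0 ≤ t → |t| ^ (p - 2) * t = t ^ (p - 1) := fun t ht ↦ by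
    rw [abs_of_nonneg ht, show p - 1 = p - 2 + 1 by ring, rpow_add_one' ht (by linarith)]
  have hgap := mul_rpow_sub_one_mul_le_rpow_sub_rpow (q := p - 1) (by linarith) (by linarith)
    hx hxy hyM
  rw [show p - 1 - 1 = p - 2 by ring] at hgap
  have hgap' := mul_le_mul_of_nonneg_left hgap (by linarith : 0 ≤ p)
  simp only [mul_assoc, hpow x hx, hpow y hy]
  linarith

lemma strongConvexOn_abs_rpow {p M : ℝ} (hp₁ : 1 < p) (hp₂ : p ≤ 2) :
    StrongConvexOn (Icc (-M) M) (p * (p - 1) * M ^ (p - 2)) (fun x : ℝ ↦ |x| ^ p) := by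
  set K := p * (p - 1) * M ^ (p - 2)
  rw [strongConvexOn_iff_convex]
  simp_rw [Real.norm_eq_abs, sq_abs]
  have hderiv : ∀ x : ℝ, HasDerivAt (fun x ↦ |x| ^ p - K / 2 * x ^ 2)
      (p * |x| ^ (p - 2) * x - K * x) x := fun x ↦ by
    refine ((hasDerivAt_abs_rpow x hp₁).sub
      ((hasDerivAt_pow 2 x).const_mul (K / 2))).congr_deriv ?_
    norm_num
    ring
  have hdiff : Differentiable ℝ (fun x ↦ |x| ^ p - K / 2 * x ^ 2) :=
    fun x ↦ (hderiv x).differentiableAt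
  refine MonotoneOn.convexOn_of_deriv (convex_Icc _ _) hdiff.continuous.continuousOn
    hdiff.differentiableOn ?_
  rw [funext fun x ↦ (hderiv x).deriv]
  exact (monotoneOn_deriv_abs_rpow_sub_mul hp₁ hp₂).mono interior_subset

lemma StrongConvexOn.two_mul_map_midpoint_add_le {E : Type*} [NormedAddCommGroup E]
    [NormedSpace ℝ E] {s : Set E} {m : ℝ} {f : E → ℝ} (hf : StrongConvexOn s m f) {x y : E}
    (hx : x ∈ s) (hy : y ∈ s) :
    2 * f (midpoint ℝ x y) + m / 4 * ‖x - y‖ ^ 2 ≤ f x + f y := by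
  obtain ⟨-, hf⟩ := hf
  have h := hf hx hy (a := 1 / 2) (b := 1 / 2) (by norm_num) (by norm_num) (by norm_num)
  rw [midpoint_eq_smul_add, smul_add, invOf_eq_inv, ← one_div]
  simp only [smul_eq_mul] at h
  linarith

theorem stmt_4_general (p M a b : ℝ) (hp1 : 1 < p) (hp2 : p ≤ 2)
    (ha : |a| ≤ M) (hb : |b| ≤ M) :
    (1 / 4) * (p * (p - 1)) * M ^ (p - 2) * (b - a) ^ 2
      ≤ |a| ^ p + |b| ^ p - 2 * |(a + b) / 2| ^ p := by
  have h := (strongConvexOn_abs_rpow hp1 hp2).two_mul_map_midpoint_add_le (abs_le.1 ha)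
    (abs_le.1 hb)
  have hmid : midpoint ℝ a b = (a + b) / 2 := by
    rw [midpoint_eq_smul_add, smul_eq_mul, invOf_eq_inv]; ring
  rw [hmid, Real.norm_eq_abs, sq_abs] at h
  linarith

/-- For `|a| ≤ M`, `|b| ≤ M` with `M > 0` and `1 < p ≤ 2`:
`|a|^p + |b|^p − 2|(a+b)/2|^p ≥ (1/4) p (p−1) M^(p−2) (b−a)^2`. -/
theorem stmt_4 (p M a b : ℝ) (hp1 : 1 < p) (hp2 : p ≤ 2) (hM : 0 < M)
    (ha : |a| ≤ M) (hb : |b| ≤ M) :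
    (1 / 4) * (p * (p - 1)) * M ^ (p - 2) * (b - a) ^ 2
      ≤ |a| ^ p + |b| ^ p - 2 * |(a + b) / 2| ^ p :=
  stmt_4_general p M a b hp1 hp2 ha hb
end

section
/- Let 1 < p ≤ 2, λ > 0, v ∈ ℝ^d, and let w* be a global minimizer of w ↦ (1/2)‖w − v‖_2^2 + λ‖w‖_p^p. Then for every coordinate j, |w*_j| ≤ min{|v_j|, (|v_j|/(λp))^{1/(p−1)}}. -/
/-!
The objective is separable, so each coordinate `t = w*_j` minimizes the scalar function
`s ↦ (1/2)(s − a)² + λ|s|^p` with `a = v_j`. Comparing with `s = a` gives `|t| ≤ |a|`.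
Along the ray `c ↦ c t` the objective is differentiable at `c = 1` even when `t = 0`, and
stationarity there reads `λp|t|^p = a t − t² ≤ |a||t|`; dividing by `|t|` and taking the
`(p − 1)`-th root gives the second bound.
-/

open Filter Topology

noncomputable def proxObjective (lam p a s : ℝ) : ℝ := 1 / 2 * (s - a) ^ 2 + lam * |s| ^ p

lemma sum_proxObjective {ι : Type*} [Fintype ι] (lam p : ℝ) (v w : ι → ℝ) :
    ∑ i, proxObjective lam p (v i) (w i)
      = 1 / 2 * ∑ i, (w i - v i) ^ 2 + lam * ∑ i, |w i| ^ p := by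
  simp only [proxObjective, Finset.sum_add_distrib, Finset.mul_sum]

lemma apply_le_of_sum_le {ι β : Type*} [Fintype ι] [DecidableEq ι] [AddCommGroup β]
    [PartialOrder β] [IsOrderedAddMonoid β] (f : ι → β → β) (x : ι → β)
    (hmin : ∀ y : ι → β, ∑ i, f i (x i) ≤ ∑ i, f i (y i)) (j : ι) (s : β) :
    f j (x j) ≤ f j s := by
  have h := hmin (Function.update x j s)
  rw [← sub_nonneg, ← Finset.sum_sub_distrib,
    Finset.sum_eq_single j (fun i _ hij => by simp [Function.update_of_ne hij]) (by simp)] at h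
  simpa using h

section Scalar

variable {lam p a t : ℝ}

lemma abs_le_abs_of_proxObjective_le (hlam : 0 ≤ lam) (hp : 0 < p)
    (hmin : ∀ s, proxObjective lam p a t ≤ proxObjective lam p a s) : |t| ≤ |a| := by
  by_contra! hlt
  have hpow : lam * |a| ^ p ≤ lam * |t| ^ p :=
    mul_le_mul_of_nonneg_left (Real.rpow_le_rpow (abs_nonneg a) hlt.le hp.le) hlam
  have hta : 0 < (t - a) ^ 2 := by
    have : t - a ≠ 0 := sub_ne_zero.mpr (by rintro rfl; exact lt_irrefl _ hlt)
    positivity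
  have := hmin a
  simp only [proxObjective, sub_self] at this
  nlinarith

lemma proxObjective_first_order
    (hmin : ∀ s, proxObjective lam p a t ≤ proxObjective lam p a s) :
    lam * p * |t| ^ p = a * t - t ^ 2 := by
  set g : ℝ → ℝ := fun c => 1 / 2 * (c * t - a) ^ 2 + lam * (c ^ p * |t| ^ p)
  have hg : IsLocalMin g 1 := by
    filter_upwards [lt_mem_nhds one_pos] with c hc
    have h := hmin (c * t)
    simp only [proxObjective, abs_mul, abs_of_pos hc, Real.mul_rpow hc.le (abs_nonneg t)] at h
    simpa [g] using h
  have hsq := (((hasDerivAt_id' (1 : ℝ)).mul_const t).sub_const a).fun_pow 2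
  have hrpow := Real.hasDerivAt_rpow_const (x := (1 : ℝ)) (p := p) (Or.inl one_ne_zero)
  have := hg.hasDerivAt_eq_zero
    ((hsq.const_mul (1 / 2)).add ((hrpow.mul_const (|t| ^ p)).const_mul lam))
  simp only [Real.one_rpow, one_mul, mul_one] at this
  linarith

lemma abs_le_rpow_of_first_order (hlam : 0 < lam) (hp : 1 < p)
    (hfo : lam * p * |t| ^ p = a * t - t ^ 2) :
    |t| ≤ (|a| / (lam * p)) ^ (1 / (p - 1)) := by
  rcases eq_or_ne t 0 with rfl | ht
  · rw [abs_zero]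
    positivity
  have htpos : 0 < |t| := abs_pos.mpr ht
  have hlp : 0 < lam * p := by positivity
  have hsplit : |t| ^ p = |t| ^ (p - 1) * |t| := by
    rw [Real.rpow_sub_one htpos.ne', div_mul_cancel₀ _ htpos.ne']
  have hmul : lam * p * |t| ^ (p - 1) * |t| ≤ |a| * |t| := by
    calc lam * p * |t| ^ (p - 1) * |t| = a * t - t ^ 2 := by rw [← hfo, hsplit]; ring
      _ ≤ |a| * |t| := by nlinarith [le_abs_self (a * t), abs_mul a t, sq_nonneg t]
  rw [one_div, Real.le_rpow_inv_iff_of_pos (abs_nonneg t) (by positivity) (by linarith),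
    le_div_iff₀ hlp, mul_comm]
  exact le_of_mul_le_mul_right hmul htpos

end Scalar

theorem stmt_5_general (d : ℕ) (p lam : ℝ) (hp1 : 1 < p) (hlam : 0 < lam)
    (v wstar : Fin d → ℝ)
    (hmin : ∀ w : Fin d → ℝ,
      (1 / 2) * ∑ j, (wstar j - v j) ^ 2 + lam * ∑ j, |wstar j| ^ p
        ≤ (1 / 2) * ∑ j, (w j - v j) ^ 2 + lam * ∑ j, |w j| ^ p) :
    ∀ j, |wstar j| ≤ min (|v j|) ((|v j| / (lam * p)) ^ (1 / (p - 1))) := by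
  intro j
  have hcoord : ∀ s, proxObjective lam p (v j) (wstar j) ≤ proxObjective lam p (v j) s :=
    apply_le_of_sum_le (fun i => proxObjective lam p (v i)) wstar
      (fun w => by simpa only [sum_proxObjective] using hmin w) j
  exact le_min (abs_le_abs_of_proxObjective_le hlam.le (by linarith) hcoord)
    (abs_le_rpow_of_first_order hlam hp1 (proxObjective_first_order hcoord))

/-- Let `1 < p ≤ 2`, `λ > 0`, `v ∈ ℝ^d`, and let `w*` be a global minimizer of
`w ↦ (1/2)‖w − v‖₂² + λ‖w‖_p^p`. Then for every coordinate `j`,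
`|w*_j| ≤ min {|v_j|, (|v_j|/(λp))^(1/(p−1))}`. -/
theorem stmt_5 (d : ℕ) (p lam : ℝ) (hp1 : 1 < p) (hp2 : p ≤ 2) (hlam : 0 < lam)
    (v wstar : Fin d → ℝ)
    (hmin : ∀ w : Fin d → ℝ,
      (1 / 2) * ∑ j, (wstar j - v j) ^ 2 + lam * ∑ j, |wstar j| ^ p
        ≤ (1 / 2) * ∑ j, (w j - v j) ^ 2 + lam * ∑ j, |w j| ^ p) :
    ∀ j, |wstar j| ≤ min (|v j|) ((|v j| / (lam * p)) ^ (1 / (p - 1))) :=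
  stmt_5_general d p lam hp1 hlam v wstar hmin
end

section
/- Let f: ℝ^d → ℝ be convex and let w_1 minimize w ↦ R_1(w) + h(w) and w_2 minimize w ↦ R_2(w) + h(w), where R_i(w) = (1/2)‖w − v_i‖_2^2 for v_1, v_2 ∈ ℝ^d and h is any function. Then for any θ ∈ [0,1], with Δ = w_2 − w_1: h(w_1) + h(w_2) − h(w_1 + θΔ) − h(w_2 − θΔ) ≤ (‖w_1 + θΔ − v_1‖_2 + ‖w_1 − v_2‖_2)·‖v_1 − v_2‖_2. -/
open scoped RealInnerProductSpace


/-- Stability comparison of two proximal objectives: if `w₁` minimizes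
`w ↦ (1/2)‖w − v₁‖² + h w` and `w₂` minimizes `w ↦ (1/2)‖w − v₂‖² + h w`, then for any
`θ ∈ [0,1]`, with `Δ = w₂ − w₁`,
`h w₁ + h w₂ − h (w₁ + θΔ) − h (w₂ − θΔ) ≤ (‖w₁ + θΔ − v₁‖ + ‖w₁ − v₂‖) ‖v₁ − v₂‖`. -/
theorem stmt_16 (d : ℕ) (h : EuclideanSpace ℝ (Fin d) → ℝ)
    (v₁ v₂ w₁ w₂ : EuclideanSpace ℝ (Fin d))
    (hw₁ : ∀ w, (1 / 2) * ‖w₁ - v₁‖ ^ 2 + h w₁ ≤ (1 / 2) * ‖w - v₁‖ ^ 2 + h w)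
    (hw₂ : ∀ w, (1 / 2) * ‖w₂ - v₂‖ ^ 2 + h w₂ ≤ (1 / 2) * ‖w - v₂‖ ^ 2 + h w)
    (θ : ℝ) (hθ0 : 0 ≤ θ) (hθ1 : θ ≤ 1) :
    h w₁ + h w₂ - h (w₁ + θ • (w₂ - w₁)) - h (w₂ - θ • (w₂ - w₁))
      ≤ (‖w₁ + θ • (w₂ - w₁) - v₁‖ + ‖w₁ - v₂‖) * ‖v₁ - v₂‖ := by
  set Δ := w₂ - w₁ with hΔ
  have h1 := hw₁ (w₁ + θ • Δ)
  have h2 := hw₂ (w₂ - θ • Δ)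
  -- expand norms
  have e1 : ‖w₁ + θ • Δ - v₁‖ ^ 2
      = ‖w₁ - v₁‖ ^ 2 + 2 * (θ * ((inner ℝ (w₁ - v₁) (Δ) : ℝ))) + θ ^ 2 * ‖Δ‖ ^ 2 := by
    have : w₁ + θ • Δ - v₁ = (w₁ - v₁) + θ • Δ := by abel
    rw [this, norm_add_sq_real, real_inner_smul_right, norm_smul]
    simp [abs_of_nonneg hθ0, mul_pow]
  have e2 : ‖w₂ - θ • Δ - v₂‖ ^ 2
      = ‖w₂ - v₂‖ ^ 2 - 2 * (θ * ((inner ℝ (w₂ - v₂) (Δ) : ℝ))) + θ ^ 2 * ‖Δ‖ ^ 2 := by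
    have : w₂ - θ • Δ - v₂ = (w₂ - v₂) - θ • Δ := by abel
    rw [this, norm_sub_sq_real, real_inner_smul_right, norm_smul]
    simp [abs_of_nonneg hθ0, mul_pow]
  have key : h w₁ + h w₂ - h (w₁ + θ • Δ) - h (w₂ - θ • Δ)
      ≤ θ * ((inner ℝ (w₁ - v₁ - (w₂ - v₂)) (Δ) : ℝ)) + θ ^ 2 * ‖Δ‖ ^ 2 := by
    have hsub : ((inner ℝ (w₁ - v₁ - (w₂ - v₂)) (Δ) : ℝ)) = ((inner ℝ (w₁ - v₁) (Δ) : ℝ)) - ((inner ℝ (w₂ - v₂) (Δ) : ℝ)) := by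
      rw [inner_sub_left]
    rw [hsub]
    linarith [h1, h2]
  have split : w₁ - v₁ - (w₂ - v₂) = -Δ - (v₁ - v₂) := by rw [hΔ]; abel
  have ip : ((inner ℝ (w₁ - v₁ - (w₂ - v₂)) (Δ) : ℝ)) = -‖Δ‖ ^ 2 - ((inner ℝ (v₁ - v₂) (Δ) : ℝ)) := by
    rw [split, inner_sub_left, inner_neg_left, real_inner_self_eq_norm_sq]
  have step1 : θ * ((inner ℝ (w₁ - v₁ - (w₂ - v₂)) (Δ) : ℝ)) + θ ^ 2 * ‖Δ‖ ^ 2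
      ≤ ((inner ℝ (v₂ - v₁) (θ • Δ) : ℝ)) := by
    have : ((inner ℝ (v₂ - v₁) (θ • Δ) : ℝ)) = θ * (- ((inner ℝ (v₁ - v₂) (Δ) : ℝ))) := by
      rw [real_inner_smul_right, ← inner_neg_left, neg_sub]
    rw [ip, this]
    nlinarith [mul_nonneg (mul_nonneg hθ0 (sub_nonneg.mpr hθ1)) (sq_nonneg ‖Δ‖)]
  have decomp : (θ • Δ : EuclideanSpace ℝ (Fin d))
      = (w₁ + θ • Δ - v₁) + (v₁ - v₂) + (v₂ - w₁) := by abel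
  have step2 : ((inner ℝ (v₂ - v₁) (θ • Δ) : ℝ))
      ≤ (‖w₁ + θ • Δ - v₁‖ + ‖w₁ - v₂‖) * ‖v₁ - v₂‖ := by
    conv_lhs => rw [decomp]
    rw [inner_add_right, inner_add_right]
    have c1 := real_inner_le_norm (v₂ - v₁) (w₁ + θ • Δ - v₁)
    have c2 : ((inner ℝ (v₂ - v₁) (v₁ - v₂) : ℝ)) = -‖v₁ - v₂‖ ^ 2 := by
      rw [← neg_sub v₁ v₂, inner_neg_left, real_inner_self_eq_norm_sq]
    have c3 := real_inner_le_norm (v₂ - v₁) (v₂ - w₁)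
    have n1 : ‖v₂ - v₁‖ = ‖v₁ - v₂‖ := norm_sub_rev _ _
    have n2 : ‖v₂ - w₁‖ = ‖w₁ - v₂‖ := norm_sub_rev _ _
    rw [n1] at c1
    rw [n1, n2] at c3
    have expand : (‖w₁ + θ • Δ - v₁‖ + ‖w₁ - v₂‖) * ‖v₁ - v₂‖
        = ‖v₁ - v₂‖ * ‖w₁ + θ • Δ - v₁‖ + ‖v₁ - v₂‖ * ‖w₁ - v₂‖ := by ring
    rw [expand]
    have := sq_nonneg ‖v₁ - v₂‖
    linarith
  linarith
end

section
/- Let a randomized algorithm A be β_n-uniformly stable with respect to a loss ℓ bounded in [0, B]. Then with probability at least 1 − δ over the draw of an i.i.d. sample D of size n, the expected generalization gap satisfies E_A[R(A_D) − R_n(A_D)] ≤ 2β_n + (4nβ_n + B)·√(log(1/δ)/(2n)). -/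
/-!
Let `g D` be the expected generalization gap on the sample `D`. Each `eF D z` is within `β` of
`eR i D z`, which does not see the `i`-th point, so replacing one point of `D` moves every loss
by at most `2β`. Hence `g` has bounded differences `4β + B/n`, and McDiarmid's inequality makes
`g - E g` sub-Gaussian with variance proxy `n (4β + B/n)² / 4`; McDiarmid is proved by peeling
off one coordinate at a time, with Hoeffding's lemma on each fibre. Exchanging the `i`-th sample
point with an independent test point shows `E g ≤ 2β`, and the Chernoff bound for the
sub-Gaussian tail at level `δ` gives the deviation `(4nβ + B) √(log (1/δ) / (2n))`.
-/

open MeasureTheory ProbabilityTheory Real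
open scoped NNReal

namespace Fin

variable {Z : Type*} {n : ℕ}

lemma insertNth_apply_eq_of_ne (i : Fin (n + 1)) (x x' : Z) (E : Fin n → Z) {j : Fin (n + 1)}
    (hj : j ≠ i) :
    insertNth (α := fun _ => Z) i x E j = insertNth (α := fun _ => Z) i x' E j := by
  obtain ⟨k, rfl⟩ := exists_succAbove_eq hj
  simp

lemma insertNth_apply_eq_of_ne_succAbove (i : Fin (n + 1)) (x : Z) {E E' : Fin n → Z}
    {k : Fin n} (hE : ∀ j, j ≠ k → E j = E' j) {j : Fin (n + 1)} (hj : j ≠ i.succAbove k) :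
    insertNth (α := fun _ => Z) i x E j = insertNth (α := fun _ => Z) i x E' j := by
  rcases eq_or_ne j i with rfl | hji
  · simp
  · obtain ⟨l, rfl⟩ := exists_succAbove_eq hji
    simpa using hE l (fun h => hj (h ▸ rfl))

end Fin

namespace ProbabilityTheory

lemma HasSubgaussianMGF.prod_of_fiberwise {α β : Type*} [MeasurableSpace α] [MeasurableSpace β]
    {μ : Measure α} {ν : Measure β} [SFinite μ] [SFinite ν] {F : α × β → ℝ} (hF : Measurable F)
    {G : β → ℝ} {m : ℝ} {c₁ c₂ : ℝ≥0} (h₁ : ∀ y, HasSubgaussianMGF (fun x => F (x, y) - G y) c₁ μ)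
    (h₂ : HasSubgaussianMGF (fun y => G y - m) c₂ ν) :
    HasSubgaussianMGF (fun p => F p - m) (c₁ + c₂) (μ.prod ν) := by
  have hsplit : ∀ t x y, exp (t * (F (x, y) - m)) =
      exp (t * (G y - m)) * exp (t * (F (x, y) - G y)) := fun t x y => by
    rw [← exp_add]; ring_nf
  have hinner : ∀ t y, ∫ x, exp (t * (F (x, y) - m)) ∂μ =
      exp (t * (G y - m)) * mgf (fun x => F (x, y) - G y) μ t := fun t y => by
    simp_rw [hsplit t _ y]; exact integral_const_mul _ _
  have hinner_le : ∀ t y, ∫ x, exp (t * (F (x, y) - m)) ∂μ ≤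
      exp (t * (G y - m)) * exp (c₁ * t ^ 2 / 2) := fun t y => by
    rw [hinner]; gcongr; exact (h₁ y).mgf_le t
  have hint : ∀ t, Integrable (fun p => exp (t * (F p - m))) (μ.prod ν) := fun t => by
    have hmeas : Measurable (fun p => exp (t * (F p - m))) := by fun_prop
    refine (integrable_prod_iff' hmeas.aestronglyMeasurable).2 ⟨ae_of_all _ fun y => ?_, ?_⟩
    · simp_rw [hsplit t _ y]
      exact ((h₁ y).integrable_exp_mul t).const_mul _
    · refine ((h₂.integrable_exp_mul t).mul_const (exp (c₁ * t ^ 2 / 2))).mono'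
        (hmeas.norm.stronglyMeasurable.integral_prod_left').aestronglyMeasurable
        (ae_of_all _ fun y => ?_)
      simp only [Real.norm_eq_abs, abs_exp]
      rw [abs_of_nonneg (integral_nonneg fun _ => (exp_pos _).le)]
      exact hinner_le t y
  refine ⟨hint, fun t => ?_⟩
  calc mgf (fun p => F p - m) (μ.prod ν) t
      = ∫ y, ∫ x, exp (t * (F (x, y) - m)) ∂μ ∂ν := integral_prod_symm _ (hint t)
    _ ≤ ∫ y, exp (t * (G y - m)) * exp (c₁ * t ^ 2 / 2) ∂ν := by
      refine integral_mono ?_ ((h₂.integrable_exp_mul t).mul_const _) (hinner_le t)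
      exact (hint t).integral_prod_right
    _ = mgf (fun y => G y - m) ν t * exp (c₁ * t ^ 2 / 2) := integral_mul_const _ _
    _ ≤ exp (c₂ * t ^ 2 / 2) * exp (c₁ * t ^ 2 / 2) := by gcongr; exact h₂.mgf_le t
    _ = exp (↑(c₁ + c₂) * t ^ 2 / 2) := by rw [← exp_add]; push_cast; ring_nf

lemma HasSubgaussianMGF.ofReal_one_sub_le_measure_le {Ω : Type*} [MeasurableSpace Ω]
    {P : Measure Ω} [IsProbabilityMeasure P] {X : Ω → ℝ} {v : ℝ≥0}
    (h : HasSubgaussianMGF X v P) (hv : v ≠ 0) {δ : ℝ} (hδ0 : 0 < δ) (hδ1 : δ ≤ 1) :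
    ENNReal.ofReal (1 - δ) ≤ P {ω | X ω ≤ √(2 * v * log (1 / δ))} := by
  have hL : 0 ≤ log (1 / δ) := log_nonneg (by rw [le_div_iff₀ hδ0]; linarith)
  have htail : P.real {ω | √(2 * v * log (1 / δ)) ≤ X ω} ≤ δ := by
    have hv0 : (0 : ℝ) < v := by positivity
    have hexp : -√(2 * v * log (1 / δ)) ^ 2 / (2 * v) = -log (1 / δ) := by
      rw [sq_sqrt (by positivity)]; field_simp
    refine (h.measure_ge_le (sqrt_nonneg _)).trans_eq ?_
    rw [hexp, exp_neg, exp_log (by positivity), one_div, inv_inv]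
  have hcompl : {ω | X ω ≤ √(2 * v * log (1 / δ))}ᶜ ⊆ {ω | √(2 * v * log (1 / δ)) ≤ X ω} :=
    fun _ hω => (not_le.1 (Set.notMem_ofPred_iff.1 hω)).le
  have hmeas : NullMeasurableSet {ω | X ω ≤ √(2 * v * log (1 / δ))} P :=
    nullMeasurableSet_le h.aemeasurable aemeasurable_const
  rw [← ofReal_measureReal]
  refine ENNReal.ofReal_le_ofReal ?_
  linarith [probReal_compl_eq_one_sub₀ hmeas, measureReal_mono (μ := P) hcompl]

variable {Z : Type*} [MeasurableSpace Z] {μ : Measure Z} [IsProbabilityMeasure μ]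

lemma hasSubgaussianMGF_sub_integral_of_sub_le {g : Z → ℝ} (hg : Measurable g) {c : ℝ≥0}
    (hc : ∀ x x', g x - g x' ≤ c) :
    HasSubgaussianMGF (fun x => g x - ∫ x', g x' ∂μ) ((c / 2) ^ 2) μ := by
  have : Nonempty Z := nonempty_of_isProbabilityMeasure μ
  have hbdd : BddBelow (Set.range g) := ⟨g (Classical.arbitrary Z) - c, by
    rintro _ ⟨x, rfl⟩; linarith [hc (Classical.arbitrary Z) x]⟩
  have hmem : ∀ x, g x ∈ Set.Icc (sInf (Set.range g)) (sInf (Set.range g) + c) := fun x =>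
    ⟨csInf_le hbdd ⟨x, rfl⟩, by
      have : g x - c ≤ sInf (Set.range g) :=
        le_csInf (Set.range_nonempty g) (by rintro _ ⟨x', rfl⟩; linarith [hc x x'])
      linarith⟩
  simpa using hasSubgaussianMGF_of_mem_Icc hg.aemeasurable (ae_of_all μ hmem)

lemma HasSubgaussianMGF.pi_succ_of_fiberwise {n : ℕ} (i : Fin (n + 1))
    {f : (Fin (n + 1) → Z) → ℝ} (hf : Measurable f) {c₁ c₂ : ℝ≥0}
    (h₁ : ∀ E, HasSubgaussianMGF
      (fun x => f (i.insertNth x E) - ∫ x', f (i.insertNth x' E) ∂μ) c₁ μ)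
    (h₂ : HasSubgaussianMGF (fun E => ∫ x, f (i.insertNth x E) ∂μ -
      ∫ E', ∫ x, f (i.insertNth x E') ∂μ ∂Measure.pi fun _ => μ) c₂ (Measure.pi fun _ => μ)) :
    HasSubgaussianMGF (fun D => f D - ∫ D', f D' ∂Measure.pi fun _ => μ) (c₁ + c₂)
      (Measure.pi fun _ => μ) := by
  set e := MeasurableEquiv.piFinSuccAbove (fun _ : Fin (n + 1) => Z) i
  have he : MeasurePreserving e (Measure.pi fun _ => μ) (μ.prod (Measure.pi fun _ => μ)) :=
    measurePreserving_piFinSuccAbove (fun _ : Fin (n + 1) => μ) i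
  set m := ∫ E, ∫ x, f (i.insertNth x E) ∂μ ∂Measure.pi fun _ => μ
  have h := HasSubgaussianMGF.prod_of_fiberwise (F := fun p => f (e.symm p))
    (hf.comp e.symm.measurable) h₁ h₂
  have hmean : ∫ D, f D ∂Measure.pi (fun _ => μ) = m := by
    have hint : Integrable (fun p => f (e.symm p)) (μ.prod (Measure.pi fun _ => μ)) := by
      simpa using (integrable_add_const_iff (c := m)).2 h.integrable
    calc ∫ D, f D ∂Measure.pi (fun _ => μ)
        = ∫ D, f (e.symm (e D)) ∂Measure.pi (fun _ => μ) := by simp only [e.symm_apply_apply]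
      _ = ∫ p, f (e.symm p) ∂μ.prod (Measure.pi fun _ => μ) :=
          he.integral_comp' (g := fun p => f (e.symm p))
      _ = m := integral_prod_symm _ hint
  rw [← he.map_eq] at h
  simpa [Function.comp_def, hmean] using h.of_map e.measurable.aemeasurable

theorem hasSubgaussianMGF_sub_integral_pi_of_sub_le {n : ℕ} {f : (Fin n → Z) → ℝ}
    (hf : Measurable f) {c : ℝ≥0}
    (hc : ∀ k (D D' : Fin n → Z), (∀ j, j ≠ k → D j = D' j) → f D - f D' ≤ c) :
    HasSubgaussianMGF (fun D => f D - ∫ D', f D' ∂Measure.pi fun _ => μ) (n * (c / 2) ^ 2)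
      (Measure.pi fun _ => μ) := by
  induction n with
  | zero =>
    have hconst : ∀ D D' : Fin 0 → Z, f D = f D' := fun D D' =>
      congrArg f (Subsingleton.elim D D')
    have hzero : (fun D => f D - ∫ D', f D' ∂Measure.pi fun _ => μ) = fun _ => 0 := by
      ext D; simp [integral_congr_ae (ae_of_all _ (hconst · D))]
    simp [hzero]
  | succ n ih =>
    have hF : Measurable fun p : Z × (Fin n → Z) => f (Fin.insertNth 0 p.1 p.2) :=
      hf.comp (MeasurableEquiv.piFinSuccAbove (fun _ : Fin (n + 1) => Z) 0).symm.measurable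
    set G : (Fin n → Z) → ℝ := fun E => ∫ x, f (Fin.insertNth 0 x E) ∂μ
    have h₁ : ∀ E, HasSubgaussianMGF
        (fun x => f (Fin.insertNth 0 x E) - ∫ x', f (Fin.insertNth 0 x' E) ∂μ) ((c / 2) ^ 2) μ :=
      fun E => hasSubgaussianMGF_sub_integral_of_sub_le (hF.comp measurable_prodMk_right)
        fun x x' => hc 0 _ _ fun j hj => Fin.insertNth_apply_eq_of_ne 0 x x' E hj
    have hint : ∀ E, Integrable (fun x => f (Fin.insertNth 0 x E)) μ := fun E => by
      simpa using (integrable_add_const_iff (c := ∫ x, f (Fin.insertNth 0 x E) ∂μ)).2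
        (h₁ E).integrable
    have hGc : ∀ k (E E' : Fin n → Z), (∀ j, j ≠ k → E j = E' j) → G E - G E' ≤ c := by
      intro k E E' hE
      rw [← integral_sub (hint E) (hint E')]
      refine (integral_mono ((hint E).sub (hint E')) (integrable_const (c : ℝ))
        fun x => hc (Fin.succAbove 0 k) _ _ fun j hj => ?_).trans (by simp)
      exact Fin.insertNth_apply_eq_of_ne_succAbove 0 x hE hj
    have hG : Measurable G := hF.stronglyMeasurable.integral_prod_left'.measurable
    simpa [add_mul, add_comm] using HasSubgaussianMGF.pi_succ_of_fiberwise 0 hf h₁ (ih hG hGc)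

end ProbabilityTheory

section Stability

lemma sub_le_two_mul_of_forall_abs_sub_le {Z ι : Type*} {n : ℕ} {ℓ : (Fin n → Z) → ι → ℝ}
    {ℓ' : Fin n → (Fin n → Z) → ι → ℝ} {β : ℝ}
    (hℓ' : ∀ i D D', (∀ j, j ≠ i → D j = D' j) → ℓ' i D = ℓ' i D')
    (hβ : ∀ i D z, |ℓ D z - ℓ' i D z| ≤ β) (i : Fin n) {D D' : Fin n → Z}
    (hD : ∀ j, j ≠ i → D j = D' j) (z : ι) : ℓ D z - ℓ D' z ≤ 2 * β := by
  have h₁ := abs_le.1 (hβ i D z)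
  have h₂ := abs_le.1 (hβ i D' z)
  rw [hℓ' i D D' hD] at h₁
  linarith [h₁.2, h₂.1]

variable {Z : Type*} [MeasurableSpace Z] {μ : Measure Z} [IsProbabilityMeasure μ]

lemma integrable_integral_sub_apply {X : Type*} [MeasurableSpace X] {ν : Measure X}
    [IsFiniteMeasure ν] {h : X → Z → ℝ} (hh : Measurable (Function.uncurry h)) {B : ℝ}
    (hB : ∀ x z, |h x z| ≤ B) {g : X → Z} (hg : Measurable g) :
    Integrable (fun x => ∫ z, h x z ∂μ - h x (g x)) ν := by
  refine Integrable.of_bound (Measurable.aestronglyMeasurable ?_) (B + B)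
    (ae_of_all _ fun x => (norm_sub_le _ _).trans (add_le_add ?_ (hB _ _)))
  · exact hh.stronglyMeasurable.integral_prod_right'.measurable.sub
      (hh.comp (measurable_id.prodMk hg))
  · simpa using norm_integral_le_of_norm_le_const (μ := μ) (f := h x) (ae_of_all _ (hB x))

lemma integral_sub_diag_le {k : Z → Z → ℝ} (hk : Measurable (Function.uncurry k)) {B : ℝ}
    (hB : ∀ x z, |k x z| ≤ B) {b : ℝ} (hb : ∀ x z, k x z - k z z ≤ b) :
    ∫ x, (∫ z, k x z ∂μ - k x x) ∂μ ≤ b := by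
  have hrow : Integrable (fun x => ∫ z, k x z ∂μ) μ :=
    Integrable.of_bound hk.stronglyMeasurable.integral_prod_right'.aestronglyMeasurable B
      (ae_of_all _ fun x => by
        simpa using norm_integral_le_of_norm_le_const (μ := μ) (f := k x) (ae_of_all _ (hB x)))
  have hdiag : Integrable (fun x => k x x) μ :=
    Integrable.of_bound (hk.comp (measurable_id.prodMk measurable_id)).aestronglyMeasurable B
      (ae_of_all _ fun x => hB x x)
  have hrow_le : ∀ x, ∫ z, k x z ∂μ ≤ ∫ z, k z z ∂μ + b := fun x => by
    have hkx : Integrable (k x) μ :=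
      Integrable.of_bound (hk.comp measurable_prodMk_left).aestronglyMeasurable B
        (ae_of_all _ (hB x))
    calc ∫ z, k x z ∂μ ≤ ∫ z, (k z z + b) ∂μ :=
          integral_mono hkx (hdiag.add (integrable_const b)) fun z => by linarith [hb x z]
      _ = ∫ z, k z z ∂μ + b := by simp [integral_add hdiag (integrable_const b)]
  have := integral_mono hrow (integrable_const _) hrow_le
  simp only [integral_const, probReal_univ, one_smul] at this
  rw [integral_sub hrow hdiag]
  linarith

lemma integral_integral_sub_apply_le {n : ℕ} (i : Fin (n + 1))
    {h : (Fin (n + 1) → Z) → Z → ℝ} (hh : Measurable (Function.uncurry h)) {B : ℝ}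
    (hB : ∀ D z, |h D z| ≤ B) {b : ℝ}
    (hrep : ∀ D D', (∀ j, j ≠ i → D j = D' j) → ∀ z, h D z - h D' z ≤ b) :
    ∫ D, (∫ z, h D z ∂μ - h D (D i)) ∂Measure.pi (fun _ => μ) ≤ b := by
  set e := MeasurableEquiv.piFinSuccAbove (fun _ : Fin (n + 1) => Z) i
  have he : MeasurePreserving e (Measure.pi fun _ => μ) (μ.prod (Measure.pi fun _ => μ)) :=
    measurePreserving_piFinSuccAbove (fun _ : Fin (n + 1) => μ) i
  set T : Z × (Fin n → Z) → ℝ := fun p => ∫ z, h (e.symm p) z ∂μ - h (e.symm p) p.1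
  have hT : Integrable T (μ.prod (Measure.pi fun _ => μ)) :=
    integrable_integral_sub_apply (h := fun p => h (e.symm p))
      (hh.comp (e.symm.measurable.prodMap measurable_id)) (fun _ _ => hB _ _) measurable_fst
  calc ∫ D, (∫ z, h D z ∂μ - h D (D i)) ∂Measure.pi (fun _ => μ)
      = ∫ E, ∫ x, T (x, E) ∂μ ∂Measure.pi (fun _ => μ) := by
        rw [← integral_prod_symm _ hT, ← he.integral_comp' T]
        simp only [T, e.symm_apply_apply]
        rfl
    _ ≤ ∫ _ : Fin n → Z, b ∂Measure.pi (fun _ => μ) := by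
        refine integral_mono hT.integral_prod_right (integrable_const b) fun E => ?_
        refine integral_sub_diag_le (k := fun x z => h (e.symm (x, E)) z) ?_ (fun x z => hB _ _)
          fun x z => hrep _ _ (fun j hj => ?_) z
        · exact hh.comp ((e.symm.measurable.comp measurable_prodMk_right).prodMap measurable_id)
        · simpa [e] using Fin.insertNth_apply_eq_of_ne i x z E hj
    _ = b := by simp

/-- For `ℓ D z` the loss at `z` of the model trained on `D`, averaged over the algorithm's
randomness, this is `E_A[R(A_D) - R_n(A_D)]`. -/
noncomputable def generalizationGap {n : ℕ} (μ : Measure Z) (ℓ : (Fin n → Z) → Z → ℝ)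
    (D : Fin n → Z) : ℝ :=
  (∫ z, ℓ D z ∂μ) - (1 / (n : ℝ)) * ∑ i, ℓ D (D i)

lemma integral_generalizationGap_le {n : ℕ} {ℓ : (Fin (n + 1) → Z) → Z → ℝ}
    (hℓ : Measurable (Function.uncurry ℓ)) {B : ℝ} (hB : ∀ D z, ℓ D z ∈ Set.Icc 0 B) {b : ℝ}
    (hrep : ∀ k D D', (∀ j, j ≠ k → D j = D' j) → ∀ z, ℓ D z - ℓ D' z ≤ b) :
    ∫ D, generalizationGap μ ℓ D ∂Measure.pi (fun _ => μ) ≤ b := by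
  have hℓB : ∀ D z, |ℓ D z| ≤ B := fun D z =>
    abs_le.2 ⟨by linarith [(hB D z).1, (hB D z).2], (hB D z).2⟩
  set T : Fin (n + 1) → (Fin (n + 1) → Z) → ℝ := fun i D => ∫ z, ℓ D z ∂μ - ℓ D (D i)
  have hT : ∀ i, Integrable (T i) (Measure.pi fun _ => μ) := fun i =>
    integrable_integral_sub_apply hℓ hℓB (measurable_pi_apply i)
  have hgap : generalizationGap μ ℓ = fun D => (1 / (n + 1 : ℝ)) * ∑ i, T i D := by
    ext D
    simp only [generalizationGap, T, Finset.sum_sub_distrib, Finset.sum_const, Finset.card_univ,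
      Fintype.card_fin, nsmul_eq_mul]
    push_cast
    field_simp
  calc ∫ D, generalizationGap μ ℓ D ∂Measure.pi (fun _ => μ)
      = (1 / (n + 1 : ℝ)) * ∑ i, ∫ D, T i D ∂Measure.pi (fun _ => μ) := by
        rw [hgap, integral_const_mul, integral_finsetSum _ fun i _ => hT i]
    _ ≤ (1 / (n + 1 : ℝ)) * ∑ _i : Fin (n + 1), b := by
        gcongr with i
        exact integral_integral_sub_apply_le i hℓ hℓB fun D D' hD => hrep i D D' hD
    _ = b := by simp; field_simp

variable {n : ℕ} {ℓ : (Fin n → Z) → Z → ℝ}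

lemma measurable_generalizationGap (hℓ : Measurable (Function.uncurry ℓ)) :
    Measurable (generalizationGap μ ℓ) :=
  hℓ.stronglyMeasurable.integral_prod_right'.measurable.sub <| measurable_const.mul <|
    Finset.measurable_sum _ fun i _ => hℓ.comp (measurable_id.prodMk (measurable_pi_apply i))

lemma generalizationGap_sub_le (hℓ : Measurable (Function.uncurry ℓ)) {B : ℝ}
    (hB : ∀ D z, ℓ D z ∈ Set.Icc 0 B) {b : ℝ} (hb : 0 ≤ b)
    (hrep : ∀ k D D', (∀ j, j ≠ k → D j = D' j) → ∀ z, ℓ D z - ℓ D' z ≤ b)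
    (k : Fin n) {D D' : Fin n → Z} (hD : ∀ j, j ≠ k → D j = D' j) :
    generalizationGap μ ℓ D - generalizationGap μ ℓ D' ≤ 2 * b + B / n := by
  have hint : ∀ D, Integrable (ℓ D) μ := fun D =>
    Integrable.of_mem_Icc 0 B (hℓ.comp measurable_prodMk_left).aemeasurable (ae_of_all _ (hB D))
  have hmean : ∫ z, ℓ D z ∂μ - ∫ z, ℓ D' z ∂μ ≤ b := by
    rw [← integral_sub (hint D) (hint D')]
    exact (integral_mono ((hint D).sub (hint D')) (integrable_const b)
      (hrep k D D' hD)).trans (by simp)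
  have hsum : ∑ i, (ℓ D' (D' i) - ℓ D (D i)) ≤ n * b + B := by
    calc ∑ i, (ℓ D' (D' i) - ℓ D (D i)) ≤ ∑ i, (b + if i = k then B else 0) := by
          refine Finset.sum_le_sum fun i _ => ?_
          split_ifs with hik
          · linarith [(hB D' (D' i)).2, (hB D (D i)).1]
          · rw [← hD i hik]
            linarith [hrep k D' D (fun j hj => (hD j hj).symm) (D i)]
      _ = n * b + B := by simp [Finset.sum_add_distrib]
  have hn : (0 : ℝ) < n := by exact_mod_cast k.pos
  calc generalizationGap μ ℓ D - generalizationGap μ ℓ D'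
      = (∫ z, ℓ D z ∂μ - ∫ z, ℓ D' z ∂μ) + (1 / n) * ∑ i, (ℓ D' (D' i) - ℓ D (D i)) := by
        simp only [generalizationGap, Finset.sum_sub_distrib]; ring
    _ ≤ b + (1 / n) * (n * b + B) := by gcongr
    _ = 2 * b + B / n := by field_simp; ring

end Stability

/-- Stability implies generalization: if a randomized algorithm is `β_n`-uniformly stable
with loss bounded in `[0, B]`, then with probability at least `1 − δ` over the i.i.d.
draw of the sample `D` of size `n`, the expected generalization gap satisfies
`E_A[R(A_D) − R_n(A_D)] ≤ 2 β_n + (4 n β_n + B) √(log(1/δ)/(2n))`.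
Here `eF D z` denotes the expectation over the algorithm's randomness of the loss of
the model trained on `D` evaluated at `z`, and `eR i D z` that of the model trained on
`D` with the `i`-th point removed. -/
theorem stmt_19 (Z : Type*) [MeasurableSpace Z] (μ : Measure Z) [IsProbabilityMeasure μ]
    (n : ℕ) (hn : 0 < n) (B βn δ : ℝ) (hB : 0 < B) (hβ : 0 ≤ βn)
    (hδ0 : 0 < δ) (hδ1 : δ < 1)
    (eF : (Fin n → Z) → Z → ℝ)
    (eR : Fin n → (Fin n → Z) → Z → ℝ)
    (hmeas : Measurable (Function.uncurry eF))
    (hbd : ∀ D z, eF D z ∈ Set.Icc 0 B)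
    (hindep : ∀ i D D', (∀ j, j ≠ i → D j = D' j) → eR i D = eR i D')
    (hstab : ∀ i D z, |eF D z - eR i D z| ≤ βn) :
    (Measure.pi fun _ : Fin n => μ)
      {D | (∫ z, eF D z ∂μ) - (1 / (n : ℝ)) * ∑ i, eF D (D i)
            ≤ 2 * βn + (4 * n * βn + B) * Real.sqrt (Real.log (1 / δ) / (2 * n))}
      ≥ ENNReal.ofReal (1 - δ) := by
  obtain ⟨n, rfl⟩ := Nat.exists_eq_add_one.2 hn
  set P := Measure.pi fun _ : Fin (n + 1) => μ
  set g := generalizationGap μ eF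
  have hrep := sub_le_two_mul_of_forall_abs_sub_le hindep hstab
  let c : ℝ≥0 := ⟨4 * βn + B / (n + 1 : ℕ), by positivity⟩
  have hc : (c : ℝ) = 4 * βn + B / (n + 1 : ℕ) := rfl
  have hsg : HasSubgaussianMGF (fun D => g D - ∫ D', g D' ∂P) ((n + 1 : ℕ) * (c / 2) ^ 2) P :=
    hasSubgaussianMGF_sub_integral_pi_of_sub_le (measurable_generalizationGap hmeas)
      fun k D D' hD => (generalizationGap_sub_le hmeas hbd (by positivity) hrep k hD).trans_eq
        (by rw [hc]; ring)
  have hε : √(2 * ↑((n + 1 : ℕ) * (c / 2) ^ 2 : ℝ≥0) * log (1 / δ)) =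
      (4 * (n + 1 : ℕ) * βn + B) * √(log (1 / δ) / (2 * (n + 1 : ℕ))) := by
    have hL : 0 ≤ log (1 / δ) := log_nonneg (by rw [le_div_iff₀ hδ0]; linarith)
    rw [show 2 * ↑((n + 1 : ℕ) * (c / 2) ^ 2 : ℝ≥0) * log (1 / δ) =
        ((n + 1 : ℕ) * c) ^ 2 * (log (1 / δ) / (2 * (n + 1 : ℕ))) by push_cast; field_simp,
      sqrt_mul' _ (by positivity), sqrt_sq (by positivity), hc]
    field_simp
  have hc0 : 0 < c := by rw [← NNReal.coe_pos, hc]; positivity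
  have hmean : ∫ D, g D ∂P ≤ 2 * βn := integral_generalizationGap_le hmeas hbd hrep
  refine (hsg.ofReal_one_sub_le_measure_le (by positivity) hδ0 hδ1.le).trans
    (measure_mono fun D hD => ?_)
  change g D ≤ _
  simp only [Set.mem_ofPred_eq, hε] at hD
  linarith
end
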